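/- arXiv:1906.07705 — 8 statements merged into one kernel-verified Lean document; each statement's English description precedes it below -/
import Mathlib

section
/- For a symmetric real n×n matrix M and indices a, b, the matrices obtained from M by deleting row and column a, respectively row and column b, have the same characteristic polynomial if and only if (M^k)_{a,a} = (M^k)_{b,b} for all natural numbers k. -/
/-!
The principal minor of `1 - X • M` at `i` is both the `(i, i)` entry of its adjugate and the
reversed characteristic polynomial of `M \ i`; reversing loses nothing, as all these
characteristic polynomials have degree `n - 1`. Over power series `1 - X • M` has the inverse
`∑ₖ Xᵏ Mᵏ`, so its adjugate is `det (1 - X • M) • ∑ₖ Xᵏ Mᵏ`, and `det (1 - X • M)` is a unit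
because its constant coefficient is `1`. Hence `M \ a` and `M \ b` are cospectral iff
`∑ₖ (Mᵏ)ₐₐ Xᵏ = ∑ₖ (Mᵏ)_bb Xᵏ`.
-/

open Matrix

/-- `M \ a` : the matrix obtained from `M` by deleting the row and column indexed by `a`. -/
noncomputable def Mdel {n : ℕ} (M : Matrix (Fin n) (Fin n) ℝ) (a : Fin n) :
    Matrix {i : Fin n // i ≠ a} {i : Fin n // i ≠ a} ℝ :=
  M.submatrix Subtype.val Subtype.val

theorem Polynomial.reverse_inj_of_natDegree_eq {R : Type*} [Semiring R] {p q : Polynomial R}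
    (h : p.natDegree = q.natDegree) : p.reverse = q.reverse ↔ p = q := by
  refine ⟨fun hpq => ?_, congrArg _⟩
  rw [reverse, reverse, h] at hpq
  simpa using congrArg (reflect q.natDegree) hpq

namespace Matrix

open PowerSeries

variable {ι R : Type*} [Fintype ι] [DecidableEq ι] [CommRing R]

theorem adjugate_apply_self (A : Matrix ι ι R) (i : ι) :
    adjugate A i i = (A.submatrix (Subtype.val : {j // j ≠ i} → ι) Subtype.val).det := by
  set B := A.updateRow i (Pi.single i 1)
  have : Unique {j // ¬j ≠ i} := ⟨⟨⟨i, not_not.2 rfl⟩⟩, fun j => Subtype.ext (not_not.1 j.2)⟩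
  have hB : B.submatrix (Subtype.val : {j // j ≠ i} → ι) (Subtype.val : {j // j ≠ i} → ι) =
      A.submatrix (Subtype.val : {j // j ≠ i} → ι) (Subtype.val : {j // j ≠ i} → ι) := by
    ext r c
    simp [B, updateRow_ne r.2]
  rw [adjugate_apply, twoBlockTriangular_det B (· ≠ i),
    det_unique (toSquareBlockProp B fun j => ¬j ≠ i)]
  · simp [toSquareBlockProp, toBlock, hB, B, not_not.1 (default : {j // ¬j ≠ i}).2]
  · rintro r hr_eq c hc_ne
    simp_all [B, updateRow_apply]

noncomputable def geomSeries (M : Matrix ι ι R) : Matrix ι ι R⟦X⟧ :=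
  of fun i j => mk fun k => (M ^ k) i j

theorem map_C_mul_geomSeries (M : Matrix ι ι R) :
    M.map C * M.geomSeries = of fun i j => mk fun k => (M ^ (k + 1)) i j := by
  ext i j k
  simp [geomSeries, mul_apply, map_sum, coeff_C_mul, pow_succ']

theorem one_sub_X_smul_mul_geomSeries (M : Matrix ι ι R) :
    (1 - (X : R⟦X⟧) • M.map C) * M.geomSeries = 1 := by
  rw [sub_mul, Matrix.one_mul, smul_mul, map_C_mul_geomSeries]
  ext i j (_ | k)
  · by_cases h : i = j <;> simp [geomSeries, one_apply, h]
  · by_cases h : i = j <;> simp [geomSeries, one_apply, h, coeff_succ_X_mul]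

theorem adjugate_one_sub_X_smul (M : Matrix ι ι R) :
    adjugate (1 - (X : R⟦X⟧) • M.map C) = det (1 - (X : R⟦X⟧) • M.map C) • M.geomSeries :=
  calc _ = adjugate (1 - (X : R⟦X⟧) • M.map C) * ((1 - X • M.map C) * M.geomSeries) := by
        rw [one_sub_X_smul_mul_geomSeries, Matrix.mul_one]
    _ = _ := by rw [← Matrix.mul_assoc, adjugate_mul, smul_mul, Matrix.one_mul]

theorem map_one_sub_X_smul (M : Matrix ι ι R) :
    (Polynomial.coeToPowerSeries.ringHom (R := R)).mapMatrix
      (1 - (Polynomial.X : Polynomial R) • M.map Polynomial.C) = 1 - (X : R⟦X⟧) • M.map C := by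
  ext i j
  by_cases h : i = j <;> simp [h, mul_comm (M _ _)]

theorem coe_charpolyRev (M : Matrix ι ι R) :
    (M.charpolyRev : R⟦X⟧) = det (1 - (X : R⟦X⟧) • M.map C) := by
  rw [charpolyRev, ← Polynomial.coeToPowerSeries.ringHom_apply, RingHom.map_det,
    map_one_sub_X_smul]

theorem isUnit_coe_charpolyRev (M : Matrix ι ι R) : IsUnit (M.charpolyRev : R⟦X⟧) := by
  rw [isUnit_iff_constantCoeff, ← coeff_zero_eq_constantCoeff_apply, Polynomial.coeff_coe,
    Polynomial.coeff_zero_eq_eval_zero, eval_charpolyRev]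
  exact isUnit_one

theorem charpolyRev_submatrix_ne (M : Matrix ι ι R) (i : ι) :
    (M.submatrix (Subtype.val : {j // j ≠ i} → ι) Subtype.val).charpolyRev =
      adjugate (1 - (Polynomial.X : Polynomial R) • M.map Polynomial.C) i i := by
  rw [adjugate_apply_self, charpolyRev]
  congr 1
  ext r c
  by_cases h : r = c <;> simp [h, Subtype.val_inj]

theorem coe_charpolyRev_submatrix_ne (M : Matrix ι ι R) (i : ι) :
    ((M.submatrix (Subtype.val : {j // j ≠ i} → ι) Subtype.val).charpolyRev : R⟦X⟧) =
      M.charpolyRev * M.geomSeries i i := by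
  rw [charpolyRev_submatrix_ne, coe_charpolyRev, ← smul_eq_mul, ← smul_apply,
    ← adjugate_one_sub_X_smul, ← map_one_sub_X_smul, ← RingHom.map_adjugate]
  rfl

theorem charpolyRev_submatrix_ne_eq_iff (M : Matrix ι ι R) (a b : ι) :
    (M.submatrix (Subtype.val : {j // j ≠ a} → ι) Subtype.val).charpolyRev =
        (M.submatrix (Subtype.val : {j // j ≠ b} → ι) Subtype.val).charpolyRev ↔
      ∀ k, (M ^ k) a a = (M ^ k) b b := by
  rw [← Polynomial.coe_inj, coe_charpolyRev_submatrix_ne, coe_charpolyRev_submatrix_ne,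
    (isUnit_coe_charpolyRev M).mul_right_inj, PowerSeries.ext_iff]
  simp [geomSeries]

theorem charpoly_submatrix_ne_eq_iff [Nontrivial R] (M : Matrix ι ι R) (a b : ι) :
    (M.submatrix (Subtype.val : {j // j ≠ a} → ι) Subtype.val).charpoly =
        (M.submatrix (Subtype.val : {j // j ≠ b} → ι) Subtype.val).charpoly ↔
      ∀ k, (M ^ k) a a = (M ^ k) b b := by
  rw [← Polynomial.reverse_inj_of_natDegree_eq (by simp [charpoly_natDegree_eq_dim]),
    reverse_charpoly, reverse_charpoly, charpolyRev_submatrix_ne_eq_iff]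

end Matrix

theorem cospectral_iff_walk_counts_general {n : ℕ}
    (M : Matrix (Fin n) (Fin n) ℝ) (a b : Fin n) :
    (Mdel M a).charpoly = (Mdel M b).charpoly ↔
      ∀ k : ℕ, (M ^ k) a a = (M ^ k) b b :=
  M.charpoly_submatrix_ne_eq_iff a b

/-- For a symmetric real `n × n` matrix `M` and distinct indices `a, b`, the deleted
matrices `M \ a` and `M \ b` have the same characteristic polynomial iff
`(M ^ k) a a = (M ^ k) b b` for all `k`. -/
theorem cospectral_iff_walk_counts {n : ℕ} (hn : 2 ≤ n)
    (M : Matrix (Fin n) (Fin n) ℝ) (hM : M.IsSymm) (a b : Fin n) (hab : a ≠ b) :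
    (Mdel M a).charpoly = (Mdel M b).charpoly ↔
      ∀ k : ℕ, (M ^ k) a a = (M ^ k) b b :=
  cospectral_iff_walk_counts_general M a b
end

section
/- For a symmetric real matrix M with spectral decomposition M = Σ_θ θ E_θ over distinct eigenvalues θ, two indices a and b are cospectral (i.e. char(M\a) = char(M\b)) if and only if (E_θ)_{a,a} = (E_θ)_{b,b} for every eigenvalue θ. -/
/-!
For `x` outside `Θ` the resolvent is `(x - M)⁻¹ = ∑ θ, (x - θ)⁻¹ E θ`, and its `(a, a)` entry is
`χ(M\a)(x) / χ(M)(x)` by Cramer's rule. Clearing denominators gives the polynomial identity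
`χ(M\a) · ∏ θ, (X - θ) = χ(M) · ∑ θ, E θ a a · ∏ η ≠ θ, (X - η)`. Since `χ(M)` and the nodal
polynomial are nonzero, `χ(M\a) = χ(M\b)` iff the two right-hand sums agree, and evaluating such
a sum at a node `θ` recovers `E θ a a`.
-/

open Matrix Polynomial Lagrange Finset

variable {ι R : Type*} [Fintype ι] [DecidableEq ι] [CommRing R]

namespace Matrix

theorem adjugate_apply_self_eq_det_submatrix (A : Matrix ι ι R) (i : ι) :
    A.adjugate i i = (A.submatrix (Subtype.val : {j // j ≠ i} → ι) Subtype.val).det := by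
  have hrow : A.updateRow i (Pi.single i 1) =
      of ((univ.erase i).piecewise A.row (1 : Matrix ι ι R).row) := by
    ext j k
    by_cases hj : j = i
    · subst hj
      simp [one_apply, Pi.single_apply, eq_comm]
    · simp [hj]
  rw [adjugate_apply, hrow, det_piecewise_one_eq_submatrix_det]
  exact (det_submatrix_equiv_self (Equiv.subtypeEquivRight (by simp)) _).symm

theorem charpoly_submatrix_ne_eq_adjugate_charmatrix (M : Matrix ι ι R) (a : ι) :
    (M.submatrix (Subtype.val : {j // j ≠ a} → ι) Subtype.val).charpoly =
      (charmatrix M).adjugate a a := by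
  rw [adjugate_apply_self_eq_det_submatrix, charpoly]
  congr 1
  ext i j
  simp [charmatrix_apply, diagonal_apply, Subtype.ext_iff]

section SpectralDecomposition

variable {M : Matrix ι ι R} {Θ : Finset R} {E : R → Matrix ι ι R}

theorem charmatrix_eq_sum_smul (hdecomp : M = ∑ θ ∈ Θ, θ • E θ) (hsum : ∑ θ ∈ Θ, E θ = 1) :
    charmatrix M = ∑ θ ∈ Θ, (X - C θ) • (E θ).map C := by
  ext i j : 1
  have hdiag : diagonal (fun _ => (X : R[X])) i j = X * C (∑ θ ∈ Θ, E θ i j) := by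
    rw [← Matrix.sum_apply, hsum, one_apply, diagonal_apply]
    split_ifs <;> simp
  rw [charmatrix_apply, hdiag, hdecomp, Matrix.sum_apply, Matrix.sum_apply, map_sum, mul_sum,
    map_sum, ← sum_sub_distrib]
  refine sum_congr rfl fun θ _ => ?_
  simp [sub_mul]

variable [DecidableEq R]

theorem charmatrix_mul_sum_nodal_erase_smul (hdecomp : M = ∑ θ ∈ Θ, θ • E θ)
    (hsum : ∑ θ ∈ Θ, E θ = 1) (hidem : ∀ θ ∈ Θ, E θ * E θ = E θ)
    (horth : ∀ θ ∈ Θ, ∀ η ∈ Θ, θ ≠ η → E θ * E η = 0) :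
    charmatrix M * ∑ θ ∈ Θ, nodal (Θ.erase θ) id • (E θ).map C = nodal Θ id • 1 := by
  have hterm : ∀ θ ∈ Θ, ∑ η ∈ Θ, ((X - C θ) • (E θ).map C) * (nodal (Θ.erase η) id • (E η).map C)
      = nodal Θ id • (E θ).map C := by
    intro θ hθ
    rw [sum_eq_single θ, smul_mul_smul_comm, ← Matrix.map_mul, hidem θ hθ,
      nodal_eq_mul_nodal_erase hθ]
    · rfl
    · intro η hη hne
      rw [smul_mul_smul_comm, ← Matrix.map_mul, horth θ hθ η hη hne.symm]
      simp
    · exact fun h => absurd hθ h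
  have hmap : ∑ θ ∈ Θ, (E θ).map C = 1 := by
    simpa only [map_sum, map_one, RingHom.mapMatrix_apply] using
      congrArg (C : R →+* R[X]).mapMatrix hsum
  rw [charmatrix_eq_sum_smul hdecomp hsum, sum_mul_sum, sum_congr rfl hterm, ← smul_sum, hmap]

theorem charpoly_submatrix_ne_mul_nodal (hdecomp : M = ∑ θ ∈ Θ, θ • E θ)
    (hsum : ∑ θ ∈ Θ, E θ = 1) (hidem : ∀ θ ∈ Θ, E θ * E θ = E θ)
    (horth : ∀ θ ∈ Θ, ∀ η ∈ Θ, θ ≠ η → E θ * E η = 0) (a : ι) :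
    (M.submatrix (Subtype.val : {j // j ≠ a} → ι) Subtype.val).charpoly * nodal Θ id =
      M.charpoly * ∑ θ ∈ Θ, C (E θ a a) * nodal (Θ.erase θ) id := by
  have h := congrArg (fun N => (adjugate (charmatrix M) * N) a a)
    (charmatrix_mul_sum_nodal_erase_smul hdecomp hsum hidem horth)
  simp only [← Matrix.mul_assoc, adjugate_mul] at h
  rw [Matrix.smul_mul, Matrix.one_mul, Matrix.mul_smul, Matrix.mul_one] at h
  simp only [Matrix.smul_apply, Matrix.sum_apply, map_apply, smul_eq_mul] at h
  rw [charpoly_submatrix_ne_eq_adjugate_charmatrix, mul_comm, ← h, charpoly]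
  simp only [mul_comm]

end SpectralDecomposition

end Matrix

theorem Lagrange.sum_C_mul_nodal_erase_eq_iff [DecidableEq R] [IsDomain R] {Θ : Finset R}
    {c d : R → R} :
    ∑ θ ∈ Θ, C (c θ) * nodal (Θ.erase θ) id = ∑ θ ∈ Θ, C (d θ) * nodal (Θ.erase θ) id ↔
      ∀ θ ∈ Θ, c θ = d θ := by
  have heval : ∀ (f : R → R), ∀ θ ∈ Θ, (∑ η ∈ Θ, C (f η) * nodal (Θ.erase η) id).eval θ =
      f θ * (nodal (Θ.erase θ) id).eval θ := by
    intro f θ hθ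
    rw [eval_finsetSum, sum_eq_single θ, eval_mul, eval_C]
    · intro η hη hne
      rw [eval_mul, mul_eq_zero]
      exact Or.inr (eval_nodal_at_node (v := id) (mem_erase.mpr ⟨hne.symm, hθ⟩))
    · exact fun h => absurd hθ h
  refine ⟨fun h θ hθ => ?_, fun h => sum_congr rfl fun θ hθ => by rw [h θ hθ]⟩
  have h_at_node := congrArg (eval θ) h
  rw [heval c θ hθ, heval d θ hθ] at h_at_node
  exact mul_right_cancel₀ (eval_nodal_not_at_node fun η hη => (ne_of_mem_erase hη).symm)
    h_at_node

theorem cospectral_iff_diag_spectral_idempotents_general {n : ℕ}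
    (M : Matrix (Fin n) (Fin n) ℝ)
    (Θ : Finset ℝ) (E : ℝ → Matrix (Fin n) (Fin n) ℝ)
    (hdecomp : M = ∑ θ ∈ Θ, θ • E θ)
    (hsum : ∑ θ ∈ Θ, E θ = 1)
    (hidem : ∀ θ ∈ Θ, E θ * E θ = E θ)
    (horth : ∀ θ ∈ Θ, ∀ η ∈ Θ, θ ≠ η → E θ * E η = 0)
    (a b : Fin n) :
    (Mdel M a).charpoly = (Mdel M b).charpoly ↔
      ∀ θ ∈ Θ, E θ a a = E θ b b := by
  rw [← (mul_left_injective₀ (nodal_ne_zero (s := Θ) (v := id))).eq_iff, Mdel, Mdel,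
    charpoly_submatrix_ne_mul_nodal hdecomp hsum hidem horth,
    charpoly_submatrix_ne_mul_nodal hdecomp hsum hidem horth,
    mul_right_inj' M.charpoly_monic.ne_zero, sum_C_mul_nodal_erase_eq_iff]

/-- For a real symmetric matrix with spectral decomposition `M = ∑ θ ∈ Θ, θ • E θ`
(`E θ` the orthogonal projections onto the eigenspaces, summing to the identity),
indices `a` and `b` are cospectral iff `(E θ) a a = (E θ) b b` for every eigenvalue `θ`. -/
theorem cospectral_iff_diag_spectral_idempotents {n : ℕ}
    (M : Matrix (Fin n) (Fin n) ℝ) (hM : M.IsSymm)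
    (Θ : Finset ℝ) (E : ℝ → Matrix (Fin n) (Fin n) ℝ)
    (hdecomp : M = ∑ θ ∈ Θ, θ • E θ)
    (hsum : ∑ θ ∈ Θ, E θ = 1)
    (hsymm : ∀ θ ∈ Θ, (E θ).IsSymm)
    (hidem : ∀ θ ∈ Θ, E θ * E θ = E θ)
    (horth : ∀ θ ∈ Θ, ∀ η ∈ Θ, θ ≠ η → E θ * E η = 0)
    (hne : ∀ θ ∈ Θ, E θ ≠ 0)
    (a b : Fin n) :
    (Mdel M a).charpoly = (Mdel M b).charpoly ↔
      ∀ θ ∈ Θ, E θ a a = E θ b b :=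
  cospectral_iff_diag_spectral_idempotents_general M Θ E hdecomp hsum hidem horth a b
end

section
/- Let M be an n×n complex matrix and a an index, and let t be a complex number with |t| < 1/‖M‖. Define W_a(t) = Σ_{ℓ≥0} (M^ℓ)_{a,a} t^ℓ and W*_a(t) = Σ_{ℓ≥1} w*_ℓ(a) t^ℓ where w*_1(a) = M_{a,a} and for ℓ ≥ 2, w*_ℓ(a) = (M_{a,ā} (M_{āā})^{ℓ−2} M_{ā,a}). Then W_a(t) = 1/(1 − W*_a(t)) whenever both series converge and W*_a(t) ≠ 1. -/
open Matrix
open scoped Matrix.Norms.L2Operator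

/-- `w*_ℓ(a)`: the weighted number of closed walks of length `ℓ` at `a` that do not
visit `a` at any internal step: `w*_1(a) = M a a` and for `ℓ ≥ 2`,
`w*_ℓ(a) = M_{a,ā} (M_{āā})^{ℓ-2} M_{ā,a}`. -/
noncomputable def wstar {n : ℕ} (M : Matrix (Fin n) (Fin n) ℂ) (a : Fin n) : ℕ → ℂ
  | 0 => 0
  | 1 => M a a
  | (m + 2) =>
      (M.toBlock (fun i => i = a) (fun i => ¬ i = a) *
        (M.toBlock (fun i => ¬ i = a) (fun i => ¬ i = a)) ^ m *
          M.toBlock (fun i => ¬ i = a) (fun i => i = a)) ⟨a, rfl⟩ ⟨a, rfl⟩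

/-!
A closed walk at `a` of positive length splits uniquely at its first return to `a` into a
non-returning closed walk followed by an arbitrary closed walk. On the matrix side this is the
telescoping identity `X ^ n - Y ^ n = ∑ Yʲ (X - Y) Xⁿ⁻¹⁻ʲ` for `X = M` and `Y = M P`, where `P`
is the diagonal projection killing the coordinate `a`: the `(a, a)` entries of `Y ^ n` vanish,
and `X - Y` only keeps the column `a`. Hence the coefficients satisfy the renewal equation
`W_ℓ₊₁ = ∑ w*ⱼ₊₁ W_ℓ₋ⱼ`, which for absolutely convergent series becomes `W = 1 + W* W` by the
Cauchy product. Absolute convergence comes from `|(Mˡ)ₐₐ|, |w*ₗ| ≤ ‖M‖ˡ`, as `‖P‖ ≤ 1`.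
-/

open Finset

theorem pow_sub_pow_eq_sum {R : Type*} [Ring R] (X Y : R) (n : ℕ) :
    X ^ n - Y ^ n = ∑ j ∈ range n, Y ^ j * (X - Y) * X ^ (n - 1 - j) := by
  have hterm : ∀ j ∈ range n, Y ^ j * (X - Y) * X ^ (n - 1 - j) =
      Y ^ j * X ^ (n - j) - Y ^ (j + 1) * X ^ (n - (j + 1)) := by
    intro j hj
    obtain ⟨k, rfl⟩ : ∃ k, n = j + 1 + k := ⟨n - (j + 1), by simp at hj; omega⟩
    rw [show j + 1 + k - 1 - j = k by omega, show j + 1 + k - j = k + 1 by omega,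
      show j + 1 + k - (j + 1) = k by omega, pow_succ', pow_succ]
    noncomm_ring
  rw [sum_congr rfl hterm, sum_range_sub', pow_zero, one_mul, Nat.sub_zero, Nat.sub_self, pow_zero,
    mul_one]

theorem norm_pow_mul_mul_le_of_norm_le_one {A : Type*} [SeminormedRing A] (X P : A)
    (hP : ‖P‖ ≤ 1) (j : ℕ) : ‖(X * P) ^ j * X‖ ≤ ‖X‖ ^ (j + 1) := by
  induction j with
  | zero => simp
  | succ j ih =>
    calc ‖(X * P) ^ (j + 1) * X‖ = ‖X * P * ((X * P) ^ j * X)‖ := by rw [pow_succ', mul_assoc]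
      _ ≤ ‖X‖ * ‖P‖ * ‖(X * P) ^ j * X‖ :=
        (norm_mul_le _ _).trans (by gcongr; exact norm_mul_le _ _)
      _ ≤ ‖X‖ * 1 * ‖X‖ ^ (j + 1) := by gcongr
      _ = ‖X‖ ^ (j + 1 + 1) := by ring

theorem HasSum.eq_one_add_mul_of_renewal {A : Type*} [NormedRing A] {u f : ℕ → A} {U F : A}
    (hu : HasSum u U) (hf : HasSum f F) (hu' : Summable (‖u ·‖)) (hf' : Summable (‖f ·‖))
    (h0 : u 0 = 1) (hrec : ∀ k, u (k + 1) = ∑ j ∈ range (k + 1), f j * u (k - j)) :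
    U = 1 + F * U := by
  have hprod := hasSum_sum_range_mul_of_summable_norm' hf' hf.summable hu' hu.summable
  rw [hf.tsum_eq, hu.tsum_eq, ← funext hrec] at hprod
  have hshift := (hasSum_nat_add_iff' 1).mpr hu
  rw [sum_range_one, h0] at hshift
  rw [← hshift.unique hprod]
  abel

theorem summable_norm_mul_pow_of_norm_le {𝕜 : Type*} [NormedDivisionRing 𝕜] {c : ℕ → 𝕜} {C : ℝ}
    {t : 𝕜} (hc : ∀ ℓ, ‖c ℓ‖ ≤ C ^ ℓ) (ht : C * ‖t‖ < 1) : Summable fun ℓ => ‖c ℓ * t ^ ℓ‖ := by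
  have hC : 0 ≤ C := (norm_nonneg _).trans (by simpa using hc 1)
  refine (summable_geometric_of_lt_one (by positivity) ht).of_nonneg_of_le
    (fun _ => norm_nonneg _) fun ℓ => ?_
  rw [norm_mul, norm_pow, mul_pow]
  gcongr
  exact hc ℓ

namespace Matrix

variable {l m n R : Type*} [Fintype m] [DecidableEq m]

def indicatorDiag [Semiring R] (q : m → Prop) [DecidablePred q] : Matrix m m R :=
  diagonal fun i => if q i then 1 else 0

theorem mul_indicatorDiag_apply [Semiring R] (A : Matrix l m R) (q : m → Prop) [DecidablePred q]
    (i : l) (j : m) : (A * (indicatorDiag q : Matrix m m R)) i j = if q j then A i j else 0 := by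
  simp [indicatorDiag]

theorem toBlock_mul_toBlock [Semiring R] (A : Matrix l m R) (B : Matrix m n R)
    (p : l → Prop) (q : m → Prop) (r : n → Prop) [DecidablePred q] :
    A.toBlock p q * B.toBlock q r = (A * (indicatorDiag q : Matrix m m R) * B).toBlock p r := by
  ext i k
  rw [toBlock_apply, Matrix.mul_apply, Matrix.mul_apply]
  simp only [mul_indicatorDiag_apply, ite_mul, zero_mul, toBlock_apply]
  rw [← sum_filter, sum_subtype _ (fun _ => mem_filter_univ _)]

theorem toBlock_mul_toBlock_pow [Semiring R] (A : Matrix m m R) (p q : m → Prop)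
    [DecidablePred q] (k : ℕ) :
    A.toBlock p q * A.toBlock q q ^ k =
      ((A * (indicatorDiag q : Matrix m m R)) ^ k * A).toBlock p q := by
  induction k with
  | zero => simp
  | succ k ih =>
    rw [pow_succ, ← Matrix.mul_assoc, ih, toBlock_mul_toBlock, pow_succ]
    simp only [Matrix.mul_assoc]

theorem sub_mul_indicatorDiag_ne_mul_apply [Ring R] (A : Matrix l m R) (N : Matrix m n R)
    (a : m) (i : l) (k : n) :
    ((A - A * (indicatorDiag (fun j => ¬ j = a) : Matrix m m R)) * N) i k = A i a * N a k := by
  simp only [Matrix.mul_apply (M := _ - _), sub_apply, mul_indicatorDiag_apply]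
  simp [sub_ite]

/-- `((M P) ^ j * M) a a` weighs the closed walks of length `j + 1` at `a` that do not visit `a`
in between. -/
theorem pow_succ_apply_self_eq_sum [Ring R] (M : Matrix m m R) (a : m) (ℓ : ℕ) :
    (M ^ (ℓ + 1)) a a = ∑ j ∈ range (ℓ + 1),
      ((M * (indicatorDiag (fun i => ¬ i = a) : Matrix m m R)) ^ j * M) a a *
        (M ^ (ℓ - j)) a a := by
  set Y := M * (indicatorDiag (fun i => ¬ i = a) : Matrix m m R)
  have hY : (Y ^ (ℓ + 1)) a a = 0 := by
    rw [pow_succ, ← Matrix.mul_assoc, mul_indicatorDiag_apply, if_neg (not_not.mpr rfl)]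
  have htel := congr_fun₂ (pow_sub_pow_eq_sum M Y (ℓ + 1)) a a
  rw [sub_apply, hY, sub_zero, Nat.add_sub_cancel] at htel
  rw [htel, Matrix.sum_apply]
  refine sum_congr rfl fun j _ => ?_
  rw [Matrix.mul_sub, ← Matrix.mul_assoc _ M, sub_mul_indicatorDiag_ne_mul_apply]

variable {𝕜 : Type*} [RCLike 𝕜]

theorem norm_entry_le_l2_opNorm [Fintype l] [Fintype n] [DecidableEq n] (A : Matrix l n 𝕜)
    (i : l) (j : n) : ‖A i j‖ ≤ ‖A‖ := by
  have h := A.l2_opNorm_mulVec (EuclideanSpace.single j 1)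
  rw [PiLp.norm_single, norm_one, mul_one] at h
  refine le_trans (le_of_eq ?_) ((PiLp.norm_apply_le _ i).trans h)
  simp

theorem norm_pow_apply_le (M : Matrix m m 𝕜) (ℓ : ℕ) (i : m) : ‖(M ^ ℓ) i i‖ ≤ ‖M‖ ^ ℓ := by
  cases ℓ with
  | zero => simp
  | succ k => exact (norm_entry_le_l2_opNorm _ i i).trans (norm_pow_le' M k.succ_pos)

theorem l2_opNorm_indicatorDiag_le (q : m → Prop) [DecidablePred q] :
    ‖(indicatorDiag q : Matrix m m 𝕜)‖ ≤ 1 := by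
  rw [indicatorDiag, l2_opNorm_diagonal, pi_norm_le_iff_of_nonneg zero_le_one]
  intro i
  split_ifs <;> simp

end Matrix

section wstar

variable {n : ℕ} (M : Matrix (Fin n) (Fin n) ℂ) (a : Fin n)

theorem wstar_succ_eq_apply (j : ℕ) :
    wstar M a (j + 1) =
      ((M * (indicatorDiag (fun i => ¬ i = a) : Matrix (Fin n) (Fin n) ℂ)) ^ j * M) a a := by
  cases j with
  | zero => simp [wstar]
  | succ k =>
    simp only [wstar, toBlock_mul_toBlock_pow, toBlock_mul_toBlock, toBlock_apply, pow_succ,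
      Matrix.mul_assoc]

theorem norm_wstar_le (ℓ : ℕ) : ‖wstar M a ℓ‖ ≤ ‖M‖ ^ ℓ := by
  cases ℓ with
  | zero => simp [wstar]
  | succ j =>
    rw [wstar_succ_eq_apply]
    exact (norm_entry_le_l2_opNorm _ a a).trans
      (norm_pow_mul_mul_le_of_norm_le_one _ _ (l2_opNorm_indicatorDiag_le _) j)

theorem pow_succ_apply_mul_pow_eq_sum_wstar (t : ℂ) (k : ℕ) :
    (M ^ (k + 1)) a a * t ^ (k + 1) =
      ∑ j ∈ range (k + 1), wstar M a (j + 1) * t ^ (j + 1) * ((M ^ (k - j)) a a * t ^ (k - j)) := by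
  rw [pow_succ_apply_self_eq_sum, sum_mul]
  refine sum_congr rfl fun j hj => ?_
  obtain ⟨i, rfl⟩ : ∃ i, k = j + i := ⟨k - j, by simp at hj; omega⟩
  rw [wstar_succ_eq_apply, Nat.add_sub_cancel_left]
  ring

end wstar

theorem walkGen_eq_inv_one_sub_nonReturning_general {n : ℕ} (M : Matrix (Fin n) (Fin n) ℂ)
    (a : Fin n) (t : ℂ) (ht : ‖t‖ < 1 / ‖M‖)
    (Wa Ws : ℂ)
    (hWa : HasSum (fun ℓ : ℕ => (M ^ ℓ) a a * t ^ ℓ) Wa)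
    (hWs : HasSum (fun ℓ : ℕ => wstar M a (ℓ + 1) * t ^ (ℓ + 1)) Ws) :
    Wa = 1 / (1 - Ws) := by
  have hM : 0 < ‖M‖ := one_div_pos.mp ((norm_nonneg t).trans_lt ht)
  have hr : ‖M‖ * ‖t‖ < 1 := by rwa [lt_div_iff₀ hM, mul_comm] at ht
  have hWa' := summable_norm_mul_pow_of_norm_le (fun ℓ => M.norm_pow_apply_le ℓ a) hr
  have hWs' := (summable_nat_add_iff (f := fun ℓ => ‖wstar M a ℓ * t ^ ℓ‖) 1).mpr
    (summable_norm_mul_pow_of_norm_le (norm_wstar_le M a) hr)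
  have hrenewal := hWa.eq_one_add_mul_of_renewal hWs hWa' hWs' (by simp)
    (pow_succ_apply_mul_pow_eq_sum_wstar M a t)
  exact eq_one_div_of_mul_eq_one_left (by linear_combination hrenewal)

/-- The generating function `W_a(t) = ∑_ℓ (M^ℓ)_{a,a} t^ℓ` for closed walks at `a` and the
generating function `W*_a(t) = ∑_{ℓ≥1} w*_ℓ(a) t^ℓ` for non-returning closed walks at `a`
satisfy `W_a(t) = 1 / (1 − W*_a(t))`. -/
theorem walkGen_eq_inv_one_sub_nonReturning {n : ℕ} (M : Matrix (Fin n) (Fin n) ℂ)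
    (a : Fin n) (t : ℂ) (ht : ‖t‖ < 1 / ‖M‖)
    (Wa Ws : ℂ)
    (hWa : HasSum (fun ℓ : ℕ => (M ^ ℓ) a a * t ^ ℓ) Wa)
    (hWs : HasSum (fun ℓ : ℕ => wstar M a (ℓ + 1) * t ^ (ℓ + 1)) Ws)
    (hWs1 : Ws ≠ 1) :
    Wa = 1 / (1 - Ws) :=
  walkGen_eq_inv_one_sub_nonReturning_general M a t ht Wa Ws hWa hWs
end

section
/- Let M be a real symmetric n×n matrix with spectral projections E_θ. If indices a and b are strongly cospectral, i.e. E_θ e_a = ± E_θ e_b for every eigenvalue θ, then a and b are cospectral: char(M\a) = char(M\b). -/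
open Matrix Polynomial

/-- The determinant of the principal submatrix deleting index `a` equals the
diagonal entry of the adjugate. -/
lemma det_submatrix_ne_eq_adjugate {R : Type*} [CommRing R] {n : ℕ}
    (A : Matrix (Fin n) (Fin n) R) (a : Fin n) :
    (A.submatrix (Subtype.val : {i : Fin n // i ≠ a} → Fin n) Subtype.val).det =
      A.adjugate a a := by
  classical
  rw [Matrix.adjugate_apply]
  let σ : ({i : Fin n // i ≠ a} ⊕ Unit) ≃ Fin n :=
    { toFun := Sum.elim Subtype.val (fun _ => a)
      invFun := fun i => if h : i = a then Sum.inr () else Sum.inl ⟨i, h⟩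
      left_inv := by
        rintro (i | u)
        · simp [i.prop]
        · simp
      right_inv := by
        intro i
        by_cases h : i = a <;> simp [h] }
  rw [← Matrix.det_submatrix_equiv_self σ]
  have hB : (A.updateRow a (Pi.single a 1)).submatrix σ σ =
      Matrix.fromBlocks (A.submatrix Subtype.val Subtype.val)
        (Matrix.of fun i _ => A i.val a) 0 1 := by
    ext i j
    rcases i with i | i <;> rcases j with j | j
    · simp [σ, Matrix.updateRow_apply, i.prop]
    · simp [σ, Matrix.updateRow_apply, i.prop]
    · simp [σ, Matrix.updateRow_apply, Pi.single_apply, Ne.symm j.prop]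
    · simp [σ, Matrix.updateRow_apply, Pi.single_apply]
  rw [hB, Matrix.det_fromBlocks_zero₂₁, Matrix.det_one, mul_one]

/-- Strongly cospectral vertices are cospectral: if `E θ e_a = ± E θ e_b` for every
spectral projection `E θ` of the real symmetric matrix `M`, then
`char(M\a) = char(M\b)`. -/
theorem cospectral_of_stronglyCospectral {n : ℕ}
    (M : Matrix (Fin n) (Fin n) ℝ) (hM : M.IsSymm)
    (Θ : Finset ℝ) (E : ℝ → Matrix (Fin n) (Fin n) ℝ)
    (hdecomp : M = ∑ θ ∈ Θ, θ • E θ)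
    (hsum : ∑ θ ∈ Θ, E θ = 1)
    (hsymm : ∀ θ ∈ Θ, (E θ).IsSymm)
    (hidem : ∀ θ ∈ Θ, E θ * E θ = E θ)
    (horth : ∀ θ ∈ Θ, ∀ η ∈ Θ, θ ≠ η → E θ * E η = 0)
    (a b : Fin n)
    (hstrong : ∀ θ ∈ Θ, ∃ ε : ℝ, (ε = 1 ∨ ε = -1) ∧
      E θ *ᵥ Pi.single a 1 = ε • (E θ *ᵥ Pi.single b 1)) :
    (Mdel M a).charpoly = (Mdel M b).charpoly := by
  classical
  -- Step 1: diagonal entries of the projections agree at `a` and `b`.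
  have hdiag : ∀ θ ∈ Θ, E θ a a = E θ b b := by
    intro θ hθ
    obtain ⟨ε, hε, heq⟩ := hstrong θ hθ
    have hε2 : ε * ε = 1 := by rcases hε with h | h <;> simp [h]
    have key : ∀ c : Fin n, E θ c c = ∑ k, (E θ *ᵥ Pi.single c 1) k * (E θ *ᵥ Pi.single c 1) k := by
      intro c
      have := congrArg (fun A => A c c) (hidem θ hθ)
      simp only [Matrix.mul_apply] at this
      rw [← this]
      apply Finset.sum_congr rfl
      intro k _
      have hsk : E θ c k = E θ k c := by
        conv_lhs => rw [← (hsymm θ hθ)]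
        rfl
      simp [Matrix.mulVec_single, hsk]
    rw [key a, key b, heq]
    rcases hε with h | h <;> subst h <;>
      exact Finset.sum_congr rfl fun k _ => by
        simp only [Pi.smul_apply, smul_eq_mul]; ring
  -- Step 2: pointwise determinant identity outside the spectrum
  set p := (Mdel M a).charpoly with hp
  set q := (Mdel M b).charpoly with hq
  have heval : ∀ t : ℝ, t ∉ Θ → p.eval t = q.eval t := by
    intro t ht
    -- resolvent at t
    set A : Matrix (Fin n) (Fin n) ℝ := t • (1 : Matrix (Fin n) (Fin n) ℝ) - M with hA
    set N : Matrix (Fin n) (Fin n) ℝ := ∑ θ ∈ Θ, (t - θ)⁻¹ • E θ with hN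
    have hAsum : A = ∑ θ ∈ Θ, (t - θ) • E θ := by
      rw [hA, hdecomp, ← hsum, Finset.smul_sum, ← Finset.sum_sub_distrib]
      exact Finset.sum_congr rfl fun θ _ => (sub_smul t θ (E θ)).symm
    have hAN : A * N = 1 := by
      rw [hAsum, hN, Finset.sum_mul_sum]
      have : ∀ θ ∈ Θ, ∑ η ∈ Θ, (t - θ) • E θ * ((t - η)⁻¹ • E η) = E θ := by
        intro θ hθ
        rw [Finset.sum_eq_single θ]
        · rw [Matrix.smul_mul, Matrix.mul_smul, hidem θ hθ, smul_smul,
            mul_inv_cancel₀ (sub_ne_zero.mpr fun h => ht (by rw [h]; exact hθ)), one_smul]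
        · intro η hη hne
          rw [Matrix.smul_mul, Matrix.mul_smul, horth θ hθ η hη (Ne.symm hne)]
          simp
        · intro h; exact absurd hθ h
      rw [Finset.sum_congr rfl this, hsum]
    have hNA : N * A = 1 := by
      rw [hAsum, hN, Finset.sum_mul_sum]
      have : ∀ θ ∈ Θ, ∑ η ∈ Θ, (t - θ)⁻¹ • E θ * ((t - η) • E η) = E θ := by
        intro θ hθ
        rw [Finset.sum_eq_single θ]
        · rw [Matrix.smul_mul, Matrix.mul_smul, hidem θ hθ, smul_smul,
            inv_mul_cancel₀ (sub_ne_zero.mpr fun h => ht (by rw [h]; exact hθ)), one_smul]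
        · intro η hη hne
          rw [Matrix.smul_mul, Matrix.mul_smul, horth θ hθ η hη (Ne.symm hne)]
          simp
        · intro h; exact absurd hθ h
      rw [Finset.sum_congr rfl this, hsum]
    have hadj : A.adjugate = A.det • N := by
      calc A.adjugate = A.adjugate * (A * N) := by rw [hAN, mul_one]
        _ = (A.adjugate * A) * N := (mul_assoc _ _ _).symm
        _ = (A.det • 1) * N := by rw [Matrix.adjugate_mul]
        _ = A.det • N := by rw [Matrix.smul_mul, one_mul]
    have hNab : N a a = N b b := by
      simp only [hN, Matrix.sum_apply, Matrix.smul_apply, smul_eq_mul]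
      exact Finset.sum_congr rfl fun θ hθ => by rw [hdiag θ hθ]
    -- evaluation of charpolys as determinants
    have hevalc : ∀ c : Fin n, (Mdel M c).charpoly.eval t =
        (A.submatrix (Subtype.val : {i : Fin n // i ≠ c} → Fin n) Subtype.val).det := by
      intro c
      rw [Matrix.charpoly, ← Polynomial.coe_evalRingHom, RingHom.map_det]
      congr 1
      ext i j
      by_cases h : i = j
      · subst h
        simp [Matrix.charmatrix_apply_eq, hA, Mdel, Matrix.one_apply]
      · have hvij : (i : Fin n) ≠ (j : Fin n) := fun hc => h (Subtype.ext hc)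
        simp [Matrix.charmatrix_apply_ne _ _ _ h, hA, Mdel, Matrix.one_apply_ne hvij]
    have ha' := hevalc a
    have hb' := hevalc b
    rw [hp, hq, ha', hb', det_submatrix_ne_eq_adjugate, det_submatrix_ne_eq_adjugate,
      hadj]
    simp [Matrix.smul_apply, hNab]
  -- Step 3: polynomials agreeing off a finite set are equal
  apply Polynomial.eq_of_infinite_eval_eq
  apply Set.Infinite.mono (s := (↑Θ : Set ℝ)ᶜ)
  · intro t ht
    exact heval t ht
  · exact (Θ.finite_toSet).infinite_compl
end

section
/- Let M be a real symmetric n×n matrix. Indices a and b are strongly cospectral if and only if φ(a) = ±φ(b) for every eigenvector φ of M, where the sign may depend only on the eigenvalue (i.e., for each eigenvalue θ there is ε_θ ∈ {±1} such that every eigenvector φ with eigenvalue θ satisfies φ(a) = ε_θ φ(b)). -/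
open Matrix

/-! Let `P = E θ`. Both conditions say that rows `a` and `b` of `P` agree up to the sign `ε`.
For the first this is immediate, since `P e_a` is the `a`-th column of the symmetric
matrix `P`. For the second, the `θ`-eigenvectors of `M` are exactly the vectors fixed by
`P`, i.e. the range of the idempotent `P`, and `(P v) a = ε (P v) b` for all `v` says
`P a = ε • P b`. -/

section SpectralDecomposition

variable {R A : Type*} [CommSemiring R] [Semiring A] [Algebra R A]
  {M : A} {Θ : Finset R} {E : R → A}

theorem proj_mul_eq_smul_of_eq_sum_smul (hdecomp : M = ∑ θ ∈ Θ, θ • E θ)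
    (hidem : ∀ θ ∈ Θ, E θ * E θ = E θ)
    (horth : ∀ θ ∈ Θ, ∀ η ∈ Θ, θ ≠ η → E θ * E η = 0) {θ : R} (hθ : θ ∈ Θ) :
    E θ * M = θ • E θ := by
  rw [hdecomp, Finset.mul_sum, Finset.sum_eq_single_of_mem θ hθ, mul_smul_comm, hidem θ hθ]
  intro η hη hne
  rw [mul_smul_comm, horth θ hθ η hη hne.symm, smul_zero]

theorem mul_proj_eq_smul_of_eq_sum_smul (hdecomp : M = ∑ θ ∈ Θ, θ • E θ)
    (hidem : ∀ θ ∈ Θ, E θ * E θ = E θ)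
    (horth : ∀ θ ∈ Θ, ∀ η ∈ Θ, θ ≠ η → E θ * E η = 0) {θ : R} (hθ : θ ∈ Θ) :
    M * E θ = θ • E θ := by
  rw [hdecomp, Finset.sum_mul, Finset.sum_eq_single_of_mem θ hθ, smul_mul_assoc, hidem θ hθ]
  intro η hη hne
  rw [smul_mul_assoc, horth η hη θ hθ hne, smul_zero]

end SpectralDecomposition

namespace Matrix

variable {ι : Type*} [Fintype ι]

theorem forall_mulVec_eq_self_imp_iff {R : Type*} [CommSemiring R] {P : Matrix ι ι R}
    (hP : P * P = P) (p : (ι → R) → Prop) :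
    (∀ φ, P *ᵥ φ = φ → p φ) ↔ ∀ v, p (P *ᵥ v) :=
  ⟨fun h v => h _ (by rw [mulVec_mulVec, hP]), fun h φ hφ => hφ ▸ h φ⟩

variable [DecidableEq ι]

theorem mulVec_eq_smul_iff_proj_mulVec_eq {K : Type*} [CommRing K] [IsDomain K]
    {M : Matrix ι ι K} {Θ : Finset K} {E : K → Matrix ι ι K} (hdecomp : M = ∑ θ ∈ Θ, θ • E θ)
    (hsum : ∑ θ ∈ Θ, E θ = 1) (hidem : ∀ θ ∈ Θ, E θ * E θ = E θ)
    (horth : ∀ θ ∈ Θ, ∀ η ∈ Θ, θ ≠ η → E θ * E η = 0) {θ : K} (hθ : θ ∈ Θ)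
    (φ : ι → K) : M *ᵥ φ = θ • φ ↔ E θ *ᵥ φ = φ := by
  constructor
  · intro hφ
    have hother : ∀ η ∈ Θ, η ≠ θ → E η *ᵥ φ = 0 := by
      intro η hη hne
      -- `E η` commutes past `M`, turning the eigenvalue `θ` into `η`
      have h : η • (E η *ᵥ φ) = θ • (E η *ᵥ φ) := by
        rw [← smul_mulVec, ← proj_mul_eq_smul_of_eq_sum_smul hdecomp hidem horth hη,
          ← mulVec_mulVec, hφ, mulVec_smul]
      have h0 : (η - θ) • (E η *ᵥ φ) = 0 := by rw [sub_smul, h, sub_self]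
      exact (smul_eq_zero.mp h0).resolve_left (sub_ne_zero.mpr hne)
    calc E θ *ᵥ φ = ∑ η ∈ Θ, E η *ᵥ φ := (Finset.sum_eq_single_of_mem θ hθ hother).symm
      _ = φ := by rw [← sum_mulVec, hsum, one_mulVec]
  · intro hφ
    rw [← hφ, mulVec_mulVec, mul_proj_eq_smul_of_eq_sum_smul hdecomp hidem horth hθ,
      smul_mulVec]

theorem forall_mulVec_apply_eq_mul_iff {R : Type*} [CommSemiring R] (P : Matrix ι ι R)
    (a b : ι) (c : R) :
    (∀ v, (P *ᵥ v) a = c * (P *ᵥ v) b) ↔ P a = c • P b := by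
  constructor
  · intro h
    funext j
    simpa [mulVec_single_one] using h (Pi.single j 1)
  · intro h v
    simp only [mulVec, h, smul_dotProduct, smul_eq_mul]

theorem IsSymm.mulVec_single_one {R : Type*} [NonAssocSemiring R] {P : Matrix ι ι R}
    (hP : P.IsSymm) (j : ι) : P *ᵥ Pi.single j 1 = P j := by
  rw [Matrix.mulVec_single_one, ← row_transpose, hP.eq]
  rfl

end Matrix

theorem stronglyCospectral_iff_eigenvector_condition_general {n : ℕ}
    (M : Matrix (Fin n) (Fin n) ℝ)
    (Θ : Finset ℝ) (E : ℝ → Matrix (Fin n) (Fin n) ℝ)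
    (hdecomp : M = ∑ θ ∈ Θ, θ • E θ)
    (hsum : ∑ θ ∈ Θ, E θ = 1)
    (hsymm : ∀ θ ∈ Θ, (E θ).IsSymm)
    (hidem : ∀ θ ∈ Θ, E θ * E θ = E θ)
    (horth : ∀ θ ∈ Θ, ∀ η ∈ Θ, θ ≠ η → E θ * E η = 0)
    (a b : Fin n) :
    (∀ θ ∈ Θ, ∃ ε : ℝ, (ε = 1 ∨ ε = -1) ∧
        E θ *ᵥ Pi.single a 1 = ε • (E θ *ᵥ Pi.single b 1)) ↔
      (∀ θ ∈ Θ, ∃ ε : ℝ, (ε = 1 ∨ ε = -1) ∧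
        ∀ φ : Fin n → ℝ, M *ᵥ φ = θ • φ → φ a = ε * φ b) := by
  refine forall₂_congr fun θ hθ => exists_congr fun ε => and_congr_right' ?_
  have hP := hsymm θ hθ
  calc E θ *ᵥ Pi.single a 1 = ε • (E θ *ᵥ Pi.single b 1) ↔ E θ a = ε • E θ b := by
        rw [hP.mulVec_single_one, hP.mulVec_single_one]
    _ ↔ ∀ v, (E θ *ᵥ v) a = ε * (E θ *ᵥ v) b := (forall_mulVec_apply_eq_mul_iff _ a b ε).symm
    _ ↔ ∀ φ, E θ *ᵥ φ = φ → φ a = ε * φ b :=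
        (forall_mulVec_eq_self_imp_iff (hidem θ hθ) fun φ => φ a = ε * φ b).symm
    _ ↔ ∀ φ, M *ᵥ φ = θ • φ → φ a = ε * φ b := by
        simp only [mulVec_eq_smul_iff_proj_mulVec_eq hdecomp hsum hidem horth hθ]

/-- For a real symmetric matrix `M` with spectral projections `E θ`, indices `a` and `b`
are strongly cospectral (`E θ e_a = ± E θ e_b` for each eigenvalue `θ`) iff for each
eigenvalue `θ` there is a sign `ε_θ = ±1` such that every eigenvector `φ` of `M` with
eigenvalue `θ` satisfies `φ a = ε_θ · φ b`. -/
theorem stronglyCospectral_iff_eigenvector_condition {n : ℕ}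
    (M : Matrix (Fin n) (Fin n) ℝ) (hM : M.IsSymm)
    (Θ : Finset ℝ) (E : ℝ → Matrix (Fin n) (Fin n) ℝ)
    (hdecomp : M = ∑ θ ∈ Θ, θ • E θ)
    (hsum : ∑ θ ∈ Θ, E θ = 1)
    (hsymm : ∀ θ ∈ Θ, (E θ).IsSymm)
    (hidem : ∀ θ ∈ Θ, E θ * E θ = E θ)
    (horth : ∀ θ ∈ Θ, ∀ η ∈ Θ, θ ≠ η → E θ * E η = 0)
    (a b : Fin n) :
    (∀ θ ∈ Θ, ∃ ε : ℝ, (ε = 1 ∨ ε = -1) ∧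
        E θ *ᵥ Pi.single a 1 = ε • (E θ *ᵥ Pi.single b 1)) ↔
      (∀ θ ∈ Θ, ∃ ε : ℝ, (ε = 1 ∨ ε = -1) ∧
        ∀ φ : Fin n → ℝ, M *ᵥ φ = θ • φ → φ a = ε * φ b) :=
  stronglyCospectral_iff_eigenvector_condition_general M Θ E hdecomp hsum hsymm hidem horth a b
end

section
/- Let M be an n×n complex symmetric matrix and suppose there is a permutation matrix P with P M P^T = M and P swapping indices a and b (and possibly moving other indices). Then for all λ not an eigenvalue of M_{S̄S̄} with S = {a,b}, the 2×2 isospectral reduction R_S(M)(λ) satisfies Q R_S(M)(λ) Q = R_S(M)(λ) where Q is the 2×2 swap matrix [[0,1],[1,0]]; i.e. the reduction over {a,b} inherits the automorphism swapping a and b. -/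
open Matrix

noncomputable def isoReduction {n : ℕ} (M : Matrix (Fin n) (Fin n) ℂ)
    (p : Fin n → Prop) [DecidablePred p] (lam : ℂ) :
    Matrix {i // p i} {i // p i} ℂ :=
  M.toBlock p p -
    M.toBlock p (fun i => ¬ p i) *
      (M.toBlock (fun i => ¬ p i) (fun i => ¬ p i) - lam • 1)⁻¹ *
        M.toBlock (fun i => ¬ p i) p

/-- If a symmetric matrix `M` has an automorphism interchanging `a` and `b`, then for
every `λ` not an eigenvalue of `M_{S̄S̄}` (with `S = {a,b}`) the `2 × 2` isospectral
reduction over `{a,b}` is invariant under conjugation by the swap matrix `[[0,1],[1,0]]`: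
equivalently its two diagonal entries agree and its two off-diagonal entries agree. -/
theorem isoReduction_swap_invariant {n : ℕ} (M : Matrix (Fin n) (Fin n) ℂ)
    (hM : M.IsSymm) (σ : Equiv.Perm (Fin n)) (hσ : ∀ i j, M (σ i) (σ j) = M i j)
    (a b : Fin n) (hab : a ≠ b) (hσa : σ a = b) (hσb : σ b = a) :
    ∀ lam : ℂ,
      (M.toBlock (fun i => ¬ (i = a ∨ i = b)) (fun i => ¬ (i = a ∨ i = b)) - lam • 1).det ≠ 0 →
      (isoReduction M (fun i => i = a ∨ i = b) lam ⟨a, Or.inl rfl⟩ ⟨a, Or.inl rfl⟩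
          = isoReduction M (fun i => i = a ∨ i = b) lam ⟨b, Or.inr rfl⟩ ⟨b, Or.inr rfl⟩ ∧
        isoReduction M (fun i => i = a ∨ i = b) lam ⟨a, Or.inl rfl⟩ ⟨b, Or.inr rfl⟩
          = isoReduction M (fun i => i = a ∨ i = b) lam ⟨b, Or.inr rfl⟩ ⟨a, Or.inl rfl⟩) := by
  intro lam _hdet
  set p : Fin n → Prop := fun i => i = a ∨ i = b with hp
  have hiff : ∀ i, (¬ p i) ↔ (¬ p (σ i)) := by
    intro i
    constructor
    · intro hi hpi
      rcases hpi with h | h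
      · exact hi (Or.inr (σ.injective (h.trans hσb.symm)))
      · exact hi (Or.inl (σ.injective (h.trans hσa.symm)))
    · intro hi hpi
      rcases hpi with h | h
      · exact hi (Or.inr (by rw [h, hσa]))
      · exact hi (Or.inl (by rw [h, hσb]))
  let τ : {i // ¬ p i} ≃ {i // ¬ p i} := Equiv.subtypeEquiv σ hiff
  have hτval : ∀ x : {i // ¬ p i}, ((τ x : {i // ¬ p i}) : Fin n) = σ x := fun _ => rfl
  set A : Matrix {i // ¬ p i} {i // ¬ p i} ℂ :=
    M.toBlock (fun i => ¬ p i) (fun i => ¬ p i) with hA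
  have hAsub : (A - lam • 1).submatrix τ τ = A - lam • 1 := by
    ext i j
    simp only [Matrix.submatrix_apply, Matrix.sub_apply, Matrix.smul_apply, hA,
      Matrix.toBlock_apply, hτval]
    rw [hσ]
    congr 1
    simp [Matrix.one_apply, τ.injective.eq_iff]
  set B : Matrix {i // ¬ p i} {i // ¬ p i} ℂ := (A - lam • 1)⁻¹ with hBdef
  have hB : ∀ i j, B (τ i) (τ j) = B i j := by
    intro i j
    have := Matrix.inv_submatrix_equiv (A - lam • 1) τ τ
    rw [hAsub] at this
    have h2 := congrFun (congrFun this i) j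
    simpa [hBdef] using h2.symm
  have hMsym : ∀ i j, M i j = M j i := by
    intro i j
    have := congrFun (congrFun hM j) i
    simpa using this
  -- entry formula
  have key : ∀ (x y : Fin n) (hx : p x) (hy : p y),
      isoReduction M p lam ⟨x, hx⟩ ⟨y, hy⟩ =
        M x y - ∑ i : {i // ¬ p i}, ∑ j : {i // ¬ p i},
          M x i * B i j * M j y := by
    intro x y hx hy
    simp [isoReduction, Matrix.sub_apply, Matrix.mul_apply, Matrix.toBlock_apply,
      Finset.sum_mul, ← hBdef, ← hA]
    rw [Finset.sum_comm]
  have sumswap : ∀ (x y : Fin n),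
      ∑ i : {i // ¬ p i}, ∑ j : {i // ¬ p i}, M (σ x) i * B i j * M j (σ y)
        = ∑ i : {i // ¬ p i}, ∑ j : {i // ¬ p i}, M x i * B i j * M j y := by
    intro x y
    rw [← Equiv.sum_comp τ]
    congr 1; ext i
    rw [← Equiv.sum_comp τ]
    congr 1; ext j
    rw [hτval, hτval, hB, hσ, hσ]
  refine ⟨?_, ?_⟩
  · rw [key a a (Or.inl rfl) (Or.inl rfl), key b b (Or.inr rfl) (Or.inr rfl),
      ← sumswap a a, ← hσ a a, hσa]
  · rw [key a b (Or.inl rfl) (Or.inr rfl), key b a (Or.inr rfl) (Or.inl rfl),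
      ← sumswap a b, hσa, hσb, hMsym a b]
end

section
/- Let M be an n×n complex matrix, S a proper nonempty subset, and λ₀ a complex number that is an eigenvalue of M but not an eigenvalue of M_{S̄S̄}. Then det(R_S(M)(λ₀) − λ₀ I) = 0; that is, every eigenvalue of M not shared with M_{S̄S̄} is an eigenvalue of the isospectral reduction. -/
open Matrix

/-!
For `λ` outside the spectrum of `M_{S̄S̄}`, the reduction `R_S(M)(λ) − λ I` is the Schur complement
of the invertible block `M_{S̄S̄} − λ I` in `M − λ I`. Hence
`det (M − λ I) = det (M_{S̄S̄} − λ I) · det (R_S(M)(λ) − λ I)`, and the first factor on the right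
does not vanish.
-/

namespace Matrix

variable {m R : Type*} [DecidableEq m] [CommRing R]

theorem toBlock_sub_smul_one_self (A : Matrix m m R) (c : R) (p : m → Prop) :
    (A - c • 1).toBlock p p = A.toBlock p p - c • 1 := by
  ext i j
  simp [one_apply, Subtype.ext_iff]

theorem toBlock_sub_smul_one_of_disjoint (A : Matrix m m R) (c : R) {p q : m → Prop}
    (hpq : Disjoint p q) : (A - c • 1).toBlock p q = A.toBlock p q := by
  ext i j
  have hij : (i : m) ≠ j := fun h => Prop.disjoint_iff.mp (Pi.disjoint_iff.mp hpq j) ⟨h ▸ i.2, j.2⟩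
  simp [one_apply_ne hij]

theorem det_eq_det_toBlock_compl_mul_det_schur [Fintype m] (A : Matrix m m R) (p : m → Prop)
    [DecidablePred p] (h : IsUnit (A.toBlock (fun i => ¬ p i) (fun i => ¬ p i)).det) :
    A.det = (A.toBlock (fun i => ¬ p i) (fun i => ¬ p i)).det *
      (A.toBlock p p - A.toBlock p (fun i => ¬ p i) *
        (A.toBlock (fun i => ¬ p i) (fun i => ¬ p i))⁻¹ * A.toBlock (fun i => ¬ p i) p).det := by
  have := invertibleOfIsUnitDet _ h
  rw [det_toBlock A p, det_fromBlocks₂₂, invOf_eq_nonsing_inv]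

end Matrix

theorem isoReduction_sub_smul_one {n : ℕ} (M : Matrix (Fin n) (Fin n) ℂ) (p : Fin n → Prop)
    [DecidablePred p] (lam : ℂ) :
    isoReduction M p lam - lam • 1 =
      (M - lam • 1).toBlock p p - (M - lam • 1).toBlock p (fun i => ¬ p i) *
        ((M - lam • 1).toBlock (fun i => ¬ p i) (fun i => ¬ p i))⁻¹ *
          (M - lam • 1).toBlock (fun i => ¬ p i) p := by
  have hdisj : Disjoint p fun i => ¬ p i := disjoint_compl_right
  rw [toBlock_sub_smul_one_self, toBlock_sub_smul_one_self,
    toBlock_sub_smul_one_of_disjoint _ _ hdisj, toBlock_sub_smul_one_of_disjoint _ _ hdisj.symm,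
    isoReduction, sub_right_comm]

theorem det_sub_smul_one_eq_mul_det_isoReduction {n : ℕ} (M : Matrix (Fin n) (Fin n) ℂ)
    (p : Fin n → Prop) [DecidablePred p] (lam : ℂ)
    (h : (M.toBlock (fun i => ¬ p i) (fun i => ¬ p i) - lam • 1).det ≠ 0) :
    (M - lam • 1).det =
      (M.toBlock (fun i => ¬ p i) (fun i => ¬ p i) - lam • 1).det *
        (isoReduction M p lam - lam • 1).det := by
  rw [← toBlock_sub_smul_one_self] at h ⊢
  rw [isoReduction_sub_smul_one]
  exact det_eq_det_toBlock_compl_mul_det_schur _ p h.isUnit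

theorem isoReduction_eigenvalue_general {n : ℕ} (M : Matrix (Fin n) (Fin n) ℂ)
    (S : Finset (Fin n)) (lam₀ : ℂ)
    (hM : (M - lam₀ • 1).det = 0)
    (hSc : (M.toBlock (fun i => ¬ i ∈ S) (fun i => ¬ i ∈ S) - lam₀ • 1).det ≠ 0) :
    (isoReduction M (fun i => i ∈ S) lam₀ - lam₀ • 1).det = 0 := by
  rw [det_sub_smul_one_eq_mul_det_isoReduction M _ lam₀ hSc] at hM
  -- `convert` reconciles the two `Fintype` instances on `↥S`.
  convert (mul_eq_zero.mp hM).resolve_left hSc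

/-- Every eigenvalue `λ₀` of `M` that is not an eigenvalue of `M_{S̄S̄}` is an eigenvalue
of the isospectral reduction: `det(R_S(M)(λ₀) − λ₀ I) = 0`. -/
theorem isoReduction_eigenvalue {n : ℕ} (M : Matrix (Fin n) (Fin n) ℂ)
    (S : Finset (Fin n)) (hS : S.Nonempty) (hS' : S ≠ Finset.univ) (lam₀ : ℂ)
    (hM : (M - lam₀ • 1).det = 0)
    (hSc : (M.toBlock (fun i => ¬ i ∈ S) (fun i => ¬ i ∈ S) - lam₀ • 1).det ≠ 0) :
    (isoReduction M (fun i => i ∈ S) lam₀ - lam₀ • 1).det = 0 :=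
  isoReduction_eigenvalue_general M S lam₀ hM hSc
end

section
/- Let M be a real symmetric n×n matrix with spectral projections E_θ, and a, b distinct indices. Then a and b are strongly cospectral if and only if a and b are cospectral and every pole of the rational function λ ↦ p(M\{a,b}, λ)/p(M, λ) is simple (has multiplicity one). -/
open Matrix Polynomial

/-- `M \ {a,b}`. -/
noncomputable def Mdel2 {n : ℕ} (M : Matrix (Fin n) (Fin n) ℝ) (a b : Fin n) :
    Matrix {i : Fin n // ¬ (i = a ∨ i = b)} {i : Fin n // ¬ (i = a ∨ i = b)} ℝ :=
  M.submatrix Subtype.val Subtype.val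

/-!
Let `φ` be the characteristic polynomial of `M`, `ρ = ∏_{θ ∈ Θ} (X - θ)` and, for `c : ℝ → ℝ`,
`P c = ρ · ∑_θ c θ / (X - θ)`. Off `Θ` the resolvent is `(λ - M)⁻¹ = ∑_θ (λ - θ)⁻¹ E θ`, so
Jacobi's complementary minor identity `det (N \ S) = det N · det (N⁻¹)[S]` gives
`φ_a ρ = φ · P (E · a a)` and `φ_{ab} ρ² = φ · (P u · P v - P w · P w')`, where `u, v, w, w'`
are the `aa, bb, ab, ba` entries of the `E θ`. As `P c (θ)` is `c θ` times a nonzero constant,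
cospectrality means `E θ a a = E θ b b` for all `θ`, and, each `θ` being a simple root of `ρ`,
simplicity of the poles means `E θ a a · E θ b b = (E θ a b)²`. For the symmetric idempotent
`E θ` these say `‖E θ eₐ‖ = ‖E θ e_b‖` and equality in Cauchy–Schwarz for `E θ eₐ, E θ e_b`.
-/

theorem exists_sign_smul_eq_iff {ι R : Type*} [Fintype ι] [CommRing R] [LinearOrder R]
    [IsStrictOrderedRing R] {x y : ι → R} :
    (∃ ε : R, (ε = 1 ∨ ε = -1) ∧ x = ε • y) ↔
      x ⬝ᵥ x = y ⬝ᵥ y ∧ (x ⬝ᵥ x) * (y ⬝ᵥ y) = (x ⬝ᵥ y) ^ 2 := by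
  constructor
  · rintro ⟨ε, hε, rfl⟩
    have hε2 : ε * ε = 1 := by rcases hε with rfl | rfl <;> norm_num
    simp only [smul_dotProduct, dotProduct_smul, smul_eq_mul]
    exact ⟨by linear_combination (y ⬝ᵥ y) * hε2, by ring⟩
  · rintro ⟨hxy, hcs⟩
    rw [← hxy, ← sq, sq_eq_sq_iff_eq_or_eq_neg] at hcs
    obtain ⟨ε, hε, hε_mul⟩ : ∃ ε : R, (ε = 1 ∨ ε = -1) ∧ ε * (x ⬝ᵥ y) = x ⬝ᵥ x := by
      rcases hcs with h | h
      · exact ⟨1, .inl rfl, by rw [h, one_mul]⟩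
      · exact ⟨-1, .inr rfl, by rw [h]; ring⟩
    have hε2 : ε * ε = 1 := by rcases hε with rfl | rfl <;> norm_num
    refine ⟨ε, hε, sub_eq_zero.mp (dotProduct_self_eq_zero.mp ?_)⟩
    calc (x - ε • y) ⬝ᵥ (x - ε • y)
        = x ⬝ᵥ x - 2 * (ε * (x ⬝ᵥ y)) + ε * ε * (y ⬝ᵥ y) := by
          simp only [sub_dotProduct, dotProduct_sub, smul_dotProduct, dotProduct_smul,
            smul_eq_mul, dotProduct_comm y x]
          ring
      _ = 0 := by rw [hε_mul, hε2, ← hxy]; ring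

namespace Matrix

variable {ι R : Type*} [Fintype ι] [DecidableEq ι]

theorem det_submatrix_subtype_eq_or_eq [CommRing R] (A : Matrix ι ι R) {a b : ι} (hab : a ≠ b) :
    (A.submatrix (Subtype.val : {i // i = a ∨ i = b} → ι) Subtype.val).det =
      A a a * A b b - A a b * A b a := by
  let e : Fin 2 ≃ {i // i = a ∨ i = b} :=
    { toFun := ![⟨a, .inl rfl⟩, ⟨b, .inr rfl⟩]
      invFun := fun i => if i.1 = a then 0 else 1
      left_inv := fun k => by fin_cases k <;> simp [hab.symm]
      right_inv := by rintro ⟨i, rfl | rfl⟩ <;> simp [hab.symm] }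
  rw [← det_submatrix_equiv_self e, submatrix_submatrix, det_fin_two]
  rfl

theorem mulVec_single_dotProduct_mulVec_single [CommSemiring R] {F : Matrix ι ι R}
    (hF : F.IsSymm) (hF2 : F * F = F) (i j : ι) :
    (F *ᵥ Pi.single i 1) ⬝ᵥ (F *ᵥ Pi.single j 1) = F i j :=
  calc (F *ᵥ Pi.single i 1) ⬝ᵥ (F *ᵥ Pi.single j 1) = (Fᵀ * F) i j := by
        rw [mulVec_single_one, mulVec_single_one, mul_apply']; rfl
    _ = F i j := by rw [hF.eq, hF2]

theorem eval_charpoly_submatrix [CommRing R] {κ : Type*} [Fintype κ] [DecidableEq κ]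
    (M : Matrix ι ι R) {f : κ → ι} (hf : Function.Injective f) (x : R) :
    (M.submatrix f f).charpoly.eval x = ((scalar ι x - M).submatrix f f).det := by
  rw [eval_charpoly]
  congr 1
  ext i j
  simp [diagonal_apply, hf.eq_iff]

/-- Jacobi's complementary minor identity. -/
theorem det_submatrix_compl [CommRing R] (N : Matrix ι ι R) (p : ι → Prop) [DecidablePred p]
    (hN : IsUnit N.det) :
    (N.submatrix (Subtype.val : {i // ¬ p i} → ι) Subtype.val).det =
      N.det * (N⁻¹.submatrix (Subtype.val : {i // p i} → ι) Subtype.val).det := by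
  set e := (Equiv.sumComm _ _).trans (Equiv.sumCompl p)
  set N' := N.submatrix e e
  set X := N⁻¹.submatrix e e
  have hNX : N' * X = 1 := by
    rw [submatrix_mul_equiv, mul_nonsing_inv _ hN, submatrix_one_equiv]
  rw [← fromBlocks_toBlocks N', ← fromBlocks_toBlocks X, fromBlocks_multiply, ← fromBlocks_one,
    fromBlocks_inj] at hNX
  -- replacing the left block column of `X` by that of the identity makes both factors triangular
  have hY : N' * fromBlocks 1 X.toBlocks₁₂ 0 X.toBlocks₂₂ =
      fromBlocks N'.toBlocks₁₁ 0 N'.toBlocks₂₁ 1 := by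
    rw [← fromBlocks_toBlocks N', fromBlocks_multiply, hNX.2.1, hNX.2.2.2]
    simp
  have hdet := congrArg det hY
  rw [det_mul, det_fromBlocks_zero₂₁, det_fromBlocks_zero₁₂, det_submatrix_equiv_self, det_one,
    det_one, one_mul, mul_one] at hdet
  exact hdet.symm

theorem det_submatrix_ne [CommRing R] (N : Matrix ι ι R) (a : ι) (hN : IsUnit N.det) :
    (N.submatrix (Subtype.val : {i // i ≠ a} → ι) Subtype.val).det = N.det * N⁻¹ a a := by
  -- `det_unique` must be told the `Fintype` instance: `Subtype.fintype`, not `Fintype.subtypeEq`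
  rw [det_submatrix_compl N (· = a) hN, @det_unique _ _ _ _ _ (Subtype.fintype _)]
  rfl

theorem det_submatrix_ne_ne [CommRing R] (N : Matrix ι ι R) {a b : ι} (hab : a ≠ b)
    (hN : IsUnit N.det) :
    (N.submatrix (Subtype.val : {i // ¬ (i = a ∨ i = b)} → ι) Subtype.val).det =
      N.det * (N⁻¹ a a * N⁻¹ b b - N⁻¹ a b * N⁻¹ b a) := by
  rw [det_submatrix_compl N (fun i => i = a ∨ i = b) hN, det_submatrix_subtype_eq_or_eq _ hab]

end Matrix

namespace Polynomial

variable {K : Type*} [Field K] [DecidableEq K]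

noncomputable def partialFractionNumerator (Θ : Finset K) (c : K → K) : K[X] :=
  ∑ θ ∈ Θ, C (c θ) * Lagrange.nodal (Θ.erase θ) id

variable {Θ : Finset K}

theorem eval_partialFractionNumerator_of_notMem (c : K → K) {x : K} (hx : x ∉ Θ) :
    (partialFractionNumerator Θ c).eval x =
      (Lagrange.nodal Θ id).eval x * ∑ θ ∈ Θ, (x - θ)⁻¹ * c θ := by
  rw [partialFractionNumerator, eval_finsetSum, Finset.mul_sum]
  refine Finset.sum_congr rfl fun θ hθ => ?_
  have hxθ : x - θ ≠ 0 := sub_ne_zero.mpr (ne_of_mem_of_not_mem hθ hx).symm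
  rw [Lagrange.nodal_eq_mul_nodal_erase hθ, eval_mul, eval_mul, eval_C]
  simp only [eval_sub, eval_X, eval_C, id]
  field_simp

theorem eval_nodal_erase_ne_zero {θ : K} : (Lagrange.nodal (Θ.erase θ) id).eval θ ≠ 0 :=
  Lagrange.eval_nodal_not_at_node fun _ hη => (Finset.ne_of_mem_erase hη).symm

theorem eval_partialFractionNumerator_of_mem (c : K → K) {θ : K} (hθ : θ ∈ Θ) :
    (partialFractionNumerator Θ c).eval θ = c θ * (Lagrange.nodal (Θ.erase θ) id).eval θ := by
  rw [partialFractionNumerator, eval_finsetSum, Finset.sum_eq_single_of_mem θ hθ, eval_mul,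
    eval_C]
  intro η _ hηθ
  rw [eval_mul, show (Lagrange.nodal (Θ.erase η) id).eval θ = 0 from
    Lagrange.eval_nodal_at_node (v := id) (Finset.mem_erase.mpr ⟨hηθ.symm, hθ⟩), mul_zero]

theorem partialFractionNumerator_inj {c d : K → K} :
    partialFractionNumerator Θ c = partialFractionNumerator Θ d ↔ ∀ θ ∈ Θ, c θ = d θ := by
  refine ⟨fun h θ hθ => ?_, fun h => Finset.sum_congr rfl fun θ hθ => by rw [h θ hθ]⟩
  have := congrArg (eval θ) h
  rwa [eval_partialFractionNumerator_of_mem c hθ, eval_partialFractionNumerator_of_mem d hθ,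
    mul_left_inj' eval_nodal_erase_ne_zero] at this

theorem isRoot_partialFractionNumerator_mul_sub_mul_iff {u v w w' : K → K} {θ : K}
    (hθ : θ ∈ Θ) :
    (partialFractionNumerator Θ u * partialFractionNumerator Θ v -
        partialFractionNumerator Θ w * partialFractionNumerator Θ w').IsRoot θ ↔
      u θ * v θ = w θ * w' θ := by
  simp only [IsRoot, eval_sub, eval_mul, eval_partialFractionNumerator_of_mem _ hθ]
  set ν := (Lagrange.nodal (Θ.erase θ) id).eval θ
  calc _ ↔ (u θ * v θ - w θ * w' θ) * ν ^ 2 = 0 := by ring_nf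
    _ ↔ _ := by rw [mul_eq_zero_iff_right (pow_ne_zero 2 eval_nodal_erase_ne_zero), sub_eq_zero]

theorem rootMultiplicity_nodal_id (z : K) :
    (Lagrange.nodal Θ id).rootMultiplicity z = if z ∈ Θ then 1 else 0 := by
  rw [← count_roots, Lagrange.nodal_eq]
  simp only [id, roots_prod_X_sub_C]
  exact Multiset.count_eq_of_nodup Θ.nodup

theorem rootMultiplicity_le_add_one_iff_isRoot {f g Q : K[X]} (hg : g ≠ 0)
    (h : g * Lagrange.nodal Θ id ^ 2 = f * Q) :
    (∀ z, f.rootMultiplicity z ≤ g.rootMultiplicity z + 1) ↔ ∀ θ ∈ Θ, Q.IsRoot θ := by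
  have hρ : Lagrange.nodal Θ id ≠ 0 := Lagrange.nodal_ne_zero
  have hfQ : f * Q ≠ 0 := h ▸ mul_ne_zero hg (pow_ne_zero _ hρ)
  have hQ : Q ≠ 0 := right_ne_zero_of_mul hfQ
  have hmult (z : K) : g.rootMultiplicity z + 2 * (if z ∈ Θ then 1 else 0) =
      f.rootMultiplicity z + Q.rootMultiplicity z := by
    rw [← rootMultiplicity_mul hfQ, ← h, rootMultiplicity_mul (h ▸ hfQ), sq,
      rootMultiplicity_mul (mul_ne_zero hρ hρ), rootMultiplicity_nodal_id]
    ring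
  constructor
  · intro hle θ hθ
    have := hmult θ
    rw [if_pos hθ] at this
    exact (rootMultiplicity_pos hQ).mp (by linarith [hle θ])
  · intro hroot z
    have := hmult z
    split_ifs at this with hz
    · linarith [(rootMultiplicity_pos hQ).mpr (hroot z hz)]
    · linarith

end Polynomial

namespace Matrix

variable {ι K : Type*} [Fintype ι] [DecidableEq ι] [Field K]

structure IsSpectralResolution (M : Matrix ι ι K) (Θ : Finset K) (E : K → Matrix ι ι K) :
    Prop where
  eq_sum_smul : M = ∑ θ ∈ Θ, θ • E θ
  sum_eq_one : ∑ θ ∈ Θ, E θ = 1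
  mul_self : ∀ θ ∈ Θ, E θ * E θ = E θ
  mul_eq_zero : ∀ θ ∈ Θ, ∀ η ∈ Θ, θ ≠ η → E θ * E η = 0

namespace IsSpectralResolution

variable {M : Matrix ι ι K} {Θ : Finset K} {E : K → Matrix ι ι K}

theorem mul_eq_smul (hE : IsSpectralResolution M Θ E) {θ : K} (hθ : θ ∈ Θ) :
    M * E θ = θ • E θ := by
  rw [hE.eq_sum_smul, Finset.sum_mul, Finset.sum_eq_single_of_mem θ hθ, smul_mul_assoc,
    hE.mul_self θ hθ]
  intro η hη hηθ
  rw [smul_mul_assoc, hE.mul_eq_zero η hη θ hθ hηθ, smul_zero]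

theorem scalar_sub_mul_resolvent (hE : IsSpectralResolution M Θ E) {x : K} (hx : x ∉ Θ) :
    (scalar ι x - M) * ∑ θ ∈ Θ, (x - θ)⁻¹ • E θ = 1 := by
  rw [Finset.mul_sum, ← hE.sum_eq_one]
  refine Finset.sum_congr rfl fun θ hθ => ?_
  have hxθ : x - θ ≠ 0 := sub_ne_zero.mpr (ne_of_mem_of_not_mem hθ hx).symm
  rw [mul_smul_comm, sub_mul, hE.mul_eq_smul hθ, scalar_apply, ← smul_eq_diagonal_mul,
    ← sub_smul, smul_smul, inv_mul_cancel₀ hxθ, one_smul]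

variable [Infinite K] [DecidableEq K]

theorem charpoly_submatrix_ne_mul_nodal (hE : IsSpectralResolution M Θ E) (a : ι) :
    (M.submatrix (Subtype.val : {i // i ≠ a} → ι) Subtype.val).charpoly * Lagrange.nodal Θ id =
      M.charpoly * partialFractionNumerator Θ (fun θ => E θ a a) := by
  refine eq_of_infinite_eval_eq _ _ (Θ.finite_toSet.infinite_compl.mono fun x hx => ?_)
  have hR := hE.scalar_sub_mul_resolvent hx
  rw [Set.mem_ofPred_eq, eval_mul, eval_mul, eval_charpoly_submatrix _ Subtype.val_injective,
    det_submatrix_ne _ a (isUnit_det_of_right_inverse hR), inv_eq_right_inv hR, ← eval_charpoly,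
    eval_partialFractionNumerator_of_notMem _ hx, sum_apply]
  simp only [smul_apply, smul_eq_mul]
  ring

theorem charpoly_submatrix_ne_ne_mul_nodal_sq (hE : IsSpectralResolution M Θ E) {a b : ι}
    (hab : a ≠ b) :
    (M.submatrix (Subtype.val : {i // ¬ (i = a ∨ i = b)} → ι) Subtype.val).charpoly *
        Lagrange.nodal Θ id ^ 2 =
      M.charpoly * (partialFractionNumerator Θ (fun θ => E θ a a) *
          partialFractionNumerator Θ (fun θ => E θ b b) -
        partialFractionNumerator Θ (fun θ => E θ a b) *
          partialFractionNumerator Θ (fun θ => E θ b a)) := by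
  refine eq_of_infinite_eval_eq _ _ (Θ.finite_toSet.infinite_compl.mono fun x hx => ?_)
  have hR := hE.scalar_sub_mul_resolvent hx
  rw [Set.mem_ofPred_eq, eval_mul, eval_mul, eval_charpoly_submatrix _ Subtype.val_injective,
    det_submatrix_ne_ne _ hab (isUnit_det_of_right_inverse hR), inv_eq_right_inv hR,
    ← eval_charpoly, eval_sub, eval_mul, eval_mul]
  simp only [eval_partialFractionNumerator_of_notMem _ hx, sum_apply, smul_apply, smul_eq_mul,
    eval_pow]
  ring

end IsSpectralResolution

end Matrix

theorem stronglyCospectral_iff_simple_poles_general {n : ℕ}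
    (M : Matrix (Fin n) (Fin n) ℝ)
    (Θ : Finset ℝ) (E : ℝ → Matrix (Fin n) (Fin n) ℝ)
    (hdecomp : M = ∑ θ ∈ Θ, θ • E θ)
    (hsum : ∑ θ ∈ Θ, E θ = 1)
    (hsymm : ∀ θ ∈ Θ, (E θ).IsSymm)
    (hidem : ∀ θ ∈ Θ, E θ * E θ = E θ)
    (horth : ∀ θ ∈ Θ, ∀ η ∈ Θ, θ ≠ η → E θ * E η = 0)
    (a b : Fin n) (hab : a ≠ b) :
    (∀ θ ∈ Θ, ∃ ε : ℝ, (ε = 1 ∨ ε = -1) ∧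
        E θ *ᵥ Pi.single a 1 = ε • (E θ *ᵥ Pi.single b 1)) ↔
      ((Mdel M a).charpoly = (Mdel M b).charpoly ∧
        ∀ z : ℝ, (M.charpoly).rootMultiplicity z
          ≤ (Mdel2 M a b).charpoly.rootMultiplicity z + 1) := by
  have hE : IsSpectralResolution M Θ E := ⟨hdecomp, hsum, hidem, horth⟩
  have hstrong (θ : ℝ) (hθ : θ ∈ Θ) :
      (∃ ε : ℝ, (ε = 1 ∨ ε = -1) ∧ E θ *ᵥ Pi.single a 1 = ε • (E θ *ᵥ Pi.single b 1)) ↔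
        E θ a a = E θ b b ∧ E θ a a * E θ b b = E θ a b ^ 2 := by
    simp only [exists_sign_smul_eq_iff,
      mulVec_single_dotProduct_mulVec_single (hsymm θ hθ) (hidem θ hθ)]
  have hcospectral :
      (Mdel M a).charpoly = (Mdel M b).charpoly ↔ ∀ θ ∈ Θ, E θ a a = E θ b b := by
    rw [Mdel, Mdel, ← mul_left_inj' Lagrange.nodal_ne_zero, hE.charpoly_submatrix_ne_mul_nodal,
      hE.charpoly_submatrix_ne_mul_nodal, mul_right_inj' M.charpoly_monic.ne_zero,
      partialFractionNumerator_inj]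
  have hpoles : (∀ z : ℝ, (M.charpoly).rootMultiplicity z
        ≤ (Mdel2 M a b).charpoly.rootMultiplicity z + 1) ↔
      ∀ θ ∈ Θ, E θ a a * E θ b b = E θ a b ^ 2 := by
    rw [Mdel2, rootMultiplicity_le_add_one_iff_isRoot (charpoly_monic _).ne_zero
      (hE.charpoly_submatrix_ne_ne_mul_nodal_sq hab)]
    refine forall₂_congr fun θ hθ => ?_
    rw [isRoot_partialFractionNumerator_mul_sub_mul_iff hθ, (hsymm θ hθ).apply a b, sq]
  rw [hcospectral, hpoles, ← forall₂_and]
  exact forall₂_congr hstrong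

/-- For a real symmetric matrix `M` with spectral projections `E θ`, distinct indices
`a, b` are strongly cospectral iff they are cospectral and every pole of the rational
function `p(M\{a,b}, λ)/p(M, λ)` is simple, i.e. for every `z` the multiplicity of `z` as
a root of `char(M)` exceeds its multiplicity as a root of `char(M\{a,b})` by at most one. -/
theorem stronglyCospectral_iff_simple_poles {n : ℕ}
    (M : Matrix (Fin n) (Fin n) ℝ) (hM : M.IsSymm)
    (Θ : Finset ℝ) (E : ℝ → Matrix (Fin n) (Fin n) ℝ)
    (hdecomp : M = ∑ θ ∈ Θ, θ • E θ)
    (hsum : ∑ θ ∈ Θ, E θ = 1)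
    (hsymm : ∀ θ ∈ Θ, (E θ).IsSymm)
    (hidem : ∀ θ ∈ Θ, E θ * E θ = E θ)
    (horth : ∀ θ ∈ Θ, ∀ η ∈ Θ, θ ≠ η → E θ * E η = 0)
    (a b : Fin n) (hab : a ≠ b) :
    (∀ θ ∈ Θ, ∃ ε : ℝ, (ε = 1 ∨ ε = -1) ∧
        E θ *ᵥ Pi.single a 1 = ε • (E θ *ᵥ Pi.single b 1)) ↔
      ((Mdel M a).charpoly = (Mdel M b).charpoly ∧
        ∀ z : ℝ, (M.charpoly).rootMultiplicity z
          ≤ (Mdel2 M a b).charpoly.rootMultiplicity z + 1) :=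
  stronglyCospectral_iff_simple_poles_general M Θ E hdecomp hsum hsymm hidem horth a b hab
end
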